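/- arXiv:2004.08783 — 2 statements merged into one kernel-verified Lean document; each statement's English description precedes it below -/
import Mathlib

section
/- Let c_1, …, c_k, c ∈ ℝ^(2^n). Then the following are equivalent: (1) for all h ∈ cl Γ_n^*, if c_i·h ≥ 0 for all i ∈ {1,…,k} then c·h ≥ 0; (2) for every ε > 0 there exist λ_1 ≥ 0, …, λ_k ≥ 0 such that for all h ∈ cl Γ_n^*, c·h + ε·h(Fin n) ≥ ∑_{i=1}^{k} λ_i·(c_i·h), where h(Fin n) denotes the value of h on the full set of all n indices. Moreover, if the set {c_1, …, c_k} has slack (there exists h ∈ cl Γ_n^* with c_i·h > 0 for all i), then in (2) one can take ε = 0, i.e. (1) is equivalent to: there exist λ_1 ≥ 0, …, λ_k ≥ 0 such that for all h ∈ cl Γ_n^*, c·h ≥ ∑_{i=1}^{k} λ_i·(c_i·h). -/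
/-- The marginal probability `q_α(v)` of the joint outcome `v` of the variables in `α`. -/
noncomputable def marginalProb {n N : ℕ} (p : Fin N → ℝ) (X : Fin n → Fin N → ℕ)
    (α : Finset (Fin n)) (v : {i // i ∈ α} → ℕ) : ℝ :=
  ∑ ω ∈ Finset.univ.filter (fun ω => ∀ i : {i // i ∈ α}, X i.1 ω = v i), p ω

/-- The base-2 Shannon entropy of the joint marginal distribution on `α`. -/
noncomputable def entropyOn {n N : ℕ} (p : Fin N → ℝ) (X : Fin n → Fin N → ℕ)
    (α : Finset (Fin n)) : ℝ :=
  (∑' v : ({i // i ∈ α} → ℕ), Real.negMulLog (marginalProb p X α v)) / Real.log 2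

/-- `h : Finset (Fin n) → ℝ` is entropic if it is the entropy profile of `n` jointly
distributed random variables on a nonempty finite probability space. -/
def IsEntropic (n : ℕ) (h : Finset (Fin n) → ℝ) : Prop :=
  ∃ (N : ℕ) (p : Fin N → ℝ) (X : Fin n → Fin N → ℕ), 0 < N ∧
    (∀ ω, 0 ≤ p ω) ∧ (∑ ω, p ω) = 1 ∧ ∀ α, h α = entropyOn p X α

/-- The closed convex cone `cl Γ_n^*` of almost entropic vectors. -/
def almostEntropic (n : ℕ) : Set (Finset (Fin n) → ℝ) :=
  closure {h | IsEntropic n h}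

/-!
The almost-entropic vectors form a closed convex cone `K`: entropic vectors are closed under
addition (independent joint copies), and time sharing with a constant variable exhibits `t • h`
as a limit of entropic vectors. For a closed convex cone, Farkas' lemma turns hypothesis (1) into
`c₀ ∈ closure (K^* + cone {cᵢ})`. Approximating `c₀` to within `δ` by `u + ∑ λᵢ cᵢ` with
`u ∈ K^*` gives `∑ λᵢ cᵢ·h ≤ c₀·h + δ‖h‖` on `K`, and on `K` the sup norm is `h(univ)` because
entropy is nonnegative and monotone. With slack at `h₀`, evaluating at `h₀` bounds the
multipliers uniformly in `ε ≤ 1`, so a convergent subsequence yields multipliers for `ε = 0`.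
-/

open Finset Real Filter Topology

section ConeDuality

open Matrix
open scoped NNReal

variable {ι κ : Type*} [Fintype ι]

lemma StrongDual.exists_eq_dotProduct (f : StrongDual ℝ (ι → ℝ)) :
    ∃ y : ι → ℝ, ∀ x, f x = x ⬝ᵥ y := by
  classical
  exact ⟨fun i => f fun j => if i = j then 1 else 0, fun x => by
    simpa [dotProduct] using LinearMap.pi_apply_eq_sum_univ (f : (ι → ℝ) →ₗ[ℝ] ℝ) x⟩

lemma ProperCone.exists_dotProduct_neg_of_notMem (C : ProperCone ℝ (ι → ℝ)) {x₀ : ι → ℝ}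
    (hx₀ : x₀ ∉ C) : ∃ y, (∀ x ∈ C, 0 ≤ x ⬝ᵥ y) ∧ x₀ ⬝ᵥ y < 0 := by
  obtain ⟨f, hC, hfx₀⟩ := C.hyperplane_separation_point hx₀
  obtain ⟨y, hy⟩ := f.exists_eq_dotProduct
  exact ⟨y, fun x hx => hy x ▸ hC x hx, hy x₀ ▸ hfx₀⟩

lemma ProperCone.mem_of_forall_mem_dual (C : ProperCone ℝ (ι → ℝ)) {y : ι → ℝ}
    (hy : ∀ u ∈ PointedCone.dual (dotProductBilin ℝ ℝ) (C : Set (ι → ℝ)), 0 ≤ u ⬝ᵥ y) :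
    y ∈ C := by
  by_contra hyC
  obtain ⟨u, hu, hyu⟩ := C.exists_dotProduct_neg_of_notMem hyC
  exact hyu.not_ge (dotProduct_comm u y ▸ hy u fun x hx => hu x hx)

theorem mem_closure_dual_sup_hull {K : ProperCone ℝ (ι → ℝ)} {c : κ → ι → ℝ} {c₀ : ι → ℝ}
    (h : ∀ x ∈ K, (∀ i, 0 ≤ c i ⬝ᵥ x) → 0 ≤ c₀ ⬝ᵥ x) :
    c₀ ∈ closure ((PointedCone.dual (dotProductBilin ℝ ℝ) (K : Set (ι → ℝ)) ⊔
      PointedCone.hull ℝ (Set.range c) : PointedCone ℝ (ι → ℝ)) : Set (ι → ℝ)) := by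
  set S := PointedCone.dual (dotProductBilin ℝ ℝ) (K : Set (ι → ℝ)) ⊔
    PointedCone.hull ℝ (Set.range c)
  by_contra hc₀
  obtain ⟨y, hSy, hc₀y⟩ := ProperCone.exists_dotProduct_neg_of_notMem (Submodule.closure S) hc₀
  have hS : ∀ u ∈ S, 0 ≤ u ⬝ᵥ y := fun u hu => hSy u (subset_closure hu)
  have hyK : y ∈ K := K.mem_of_forall_mem_dual fun u hu => hS u (Submodule.mem_sup_left hu)
  have hcy : ∀ i, 0 ≤ c i ⬝ᵥ y := fun i =>
    hS _ (Submodule.mem_sup_right (PointedCone.subset_hull ⟨i, rfl⟩))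
  exact hc₀y.not_ge (h y hyK hcy)

lemma dotProduct_le_card_mul_norm_mul_norm (v w : ι → ℝ) :
    v ⬝ᵥ w ≤ Fintype.card ι * (‖v‖ * ‖w‖) := by
  calc v ⬝ᵥ w ≤ ∑ i, ‖v i‖ * ‖w i‖ := sum_le_sum fun i _ => by
        simpa only [← norm_mul] using Real.le_norm_self _
    _ ≤ ∑ _i : ι, ‖v‖ * ‖w‖ := by gcongr with i <;> exact norm_le_pi_norm _ i
    _ = _ := by simp

theorem exists_sum_mul_dotProduct_le_add_mul_norm [Fintype κ] {K : ProperCone ℝ (ι → ℝ)}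
    {c : κ → ι → ℝ} {c₀ : ι → ℝ} (h : ∀ x ∈ K, (∀ i, 0 ≤ c i ⬝ᵥ x) → 0 ≤ c₀ ⬝ᵥ x)
    {δ : ℝ} (hδ : 0 < δ) :
    ∃ lam : κ → ℝ, (∀ i, 0 ≤ lam i) ∧
      ∀ x ∈ K, ∑ i, lam i * (c i ⬝ᵥ x) ≤ c₀ ⬝ᵥ x + δ * ‖x‖ := by
  obtain ⟨s, hs, hdist⟩ := Metric.mem_closure_iff.1 (mem_closure_dual_sup_hull h)
    (δ / (Fintype.card ι + 1)) (by positivity)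
  obtain ⟨u, hu, v, hv, rfl⟩ := Submodule.mem_sup.1 hs
  obtain ⟨lam, rfl⟩ := (Submodule.mem_span_range_iff_exists_fun ℝ≥0).1 hv
  refine ⟨fun i => lam i, fun i => (lam i).2, fun x hx => ?_⟩
  have hux : 0 ≤ u ⬝ᵥ x := dotProduct_comm x u ▸ hu hx
  have hsplit : (u + ∑ i, lam i • c i) ⬝ᵥ x = u ⬝ᵥ x + ∑ i, (lam i : ℝ) * (c i ⬝ᵥ x) := by
    simp [add_dotProduct, sum_dotProduct, NNReal.smul_def]
  have herr : (u + ∑ i, lam i • c i - c₀) ⬝ᵥ x ≤ δ * ‖x‖ := by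
    rw [dist_comm, dist_eq_norm] at hdist
    calc _ ≤ Fintype.card ι * (‖u + ∑ i, lam i • c i - c₀‖ * ‖x‖) :=
          dotProduct_le_card_mul_norm_mul_norm _ _
      _ ≤ (Fintype.card ι + 1) * (δ / (Fintype.card ι + 1) * ‖x‖) := by
          gcongr
          · linarith
          · exact hdist.le
      _ = δ * ‖x‖ := by field_simp
  rw [sub_dotProduct, hsplit] at herr
  linarith

theorem nonneg_of_forall_sum_mul_le_add_mul [Fintype κ] {E : Type*} {K : Set E} {A : κ → E → ℝ}
    {B r : E → ℝ} (hr : ∀ x ∈ K, 0 ≤ r x)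
    (h : ∀ ε > 0, ∃ lam : κ → ℝ, (∀ i, 0 ≤ lam i) ∧ ∀ x ∈ K, ∑ i, lam i * A i x ≤ B x + ε * r x)
    {x : E} (hx : x ∈ K) (hA : ∀ i, 0 ≤ A i x) : 0 ≤ B x := by
  refine le_of_forall_pos_le_add fun ε hε => ?_
  obtain ⟨lam, hlam, hle⟩ := h (ε / (r x + 1)) (by have := hr x hx; positivity)
  have hsum : 0 ≤ ∑ i, lam i * A i x := sum_nonneg fun i _ => mul_nonneg (hlam i) (hA i)
  have herr : ε / (r x + 1) * r x ≤ ε := by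
    rw [div_mul_eq_mul_div, div_le_iff₀ (by linarith [hr x hx])]
    nlinarith [hr x hx]
  linarith [hle x hx]

theorem exists_forall_sum_mul_le_of_pos [Fintype κ] {E : Type*} {K : Set E} {A : κ → E → ℝ}
    {B r : E → ℝ} {x₀ : E} (hx₀ : x₀ ∈ K) (hA : ∀ i, 0 < A i x₀)
    (h : ∀ ε > 0, ∃ lam : κ → ℝ, (∀ i, 0 ≤ lam i) ∧ ∀ x ∈ K, ∑ i, lam i * A i x ≤ B x + ε * r x) :
    ∃ lam : κ → ℝ, (∀ i, 0 ≤ lam i) ∧ ∀ x ∈ K, ∑ i, lam i * A i x ≤ B x := by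
  choose lam hlam hle using fun m : ℕ => h (1 / (m + 1)) (by positivity)
  -- Evaluating at `x₀` bounds every admissible multiplier vector.
  have hbound : ∀ m, lam m ∈ Set.Icc 0 fun i => (B x₀ + |r x₀|) / A i x₀ := fun m =>
    ⟨hlam m, fun i => by
      have hε : 1 / ((m : ℝ) + 1) * r x₀ ≤ |r x₀| := by
        refine (le_abs_self _).trans ?_
        rw [abs_mul, abs_of_pos (by positivity)]
        exact mul_le_of_le_one_left (abs_nonneg _) (div_le_one_of_le₀ (by simp) (by positivity))
      show lam m i ≤ (B x₀ + |r x₀|) / A i x₀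
      rw [le_div_iff₀ (hA i)]
      calc lam m i * A i x₀ ≤ ∑ j, lam m j * A j x₀ :=
            single_le_sum (fun j _ => mul_nonneg (hlam m j) (hA j).le) (mem_univ i)
        _ ≤ B x₀ + |r x₀| := by linarith [hle m x₀ hx₀]⟩
  obtain ⟨a, ha, φ, hφ, hlim⟩ := isCompact_Icc.tendsto_subseq hbound
  refine ⟨a, ha.1, fun x hx => le_of_tendsto_of_tendsto' (b := atTop) ?_ ?_ fun m => hle (φ m) x hx⟩
  · exact ((by fun_prop : Continuous fun l : κ → ℝ => ∑ i, l i * A i x).tendsto a).comp hlim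
  · simpa using tendsto_const_nhds.add
      ((tendsto_one_div_add_atTop_nhds_zero_nat.comp hφ.tendsto_atTop).mul_const (r x))

end ConeDuality

lemma Real.negMulLog_add_le {a b : ℝ} (ha : 0 ≤ a) (hb : 0 ≤ b) :
    negMulLog (a + b) ≤ negMulLog a + negMulLog b := by
  have key : ∀ {x y : ℝ}, 0 ≤ x → 0 ≤ y → -(x * log (x + y)) ≤ negMulLog x := by
    intro x y hx hy
    rcases hx.eq_or_lt with rfl | hx
    · simp
    · rw [negMulLog, neg_mul, neg_le_neg_iff]
      exact mul_le_mul_of_nonneg_left (log_le_log hx (by linarith)) hx.le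
  have hsplit : negMulLog (a + b) = -(a * log (a + b)) + -(b * log (a + b)) := by
    rw [negMulLog]; ring
  have hb' := key hb ha
  rw [add_comm b] at hb'
  linarith [key ha hb]

lemma Real.negMulLog_sum_le {ι : Type*} {s : Finset ι} {f : ι → ℝ} (hf : ∀ i ∈ s, 0 ≤ f i) :
    negMulLog (∑ i ∈ s, f i) ≤ ∑ i ∈ s, negMulLog (f i) :=
  le_sum_of_subadditive_on_pred _ (0 ≤ ·) (by simp) (fun _ _ => negMulLog_add_le)
    (fun _ _ => add_nonneg) f hf

namespace Shannon

variable {Ω Ω₁ Ω₂ V V₁ V₂ W : Type*} [Fintype Ω] [Fintype Ω₁] [Fintype Ω₂]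

open Classical in
noncomputable def law (p : Ω → ℝ) (F : Ω → V) (v : V) : ℝ :=
  ∑ ω, if F ω = v then p ω else 0

noncomputable def entropy (p : Ω → ℝ) (F : Ω → V) : ℝ :=
  ∑' v, negMulLog (law p F v)

variable {p : Ω → ℝ} {F : Ω → V}

lemma law_nonneg (hp : ∀ ω, 0 ≤ p ω) (v : V) : 0 ≤ law p F v :=
  sum_nonneg fun ω _ => by split_ifs <;> simp [hp]

lemma law_le_one (hp : ∀ ω, 0 ≤ p ω) (hp₁ : ∑ ω, p ω = 1) (v : V) : law p F v ≤ 1 :=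
  hp₁ ▸ sum_le_sum fun ω _ => by split_ifs <;> simp [hp]

lemma law_eq_zero {v : V} (hv : v ∉ Set.range F) : law p F v = 0 :=
  sum_eq_zero fun ω _ => if_neg fun h => hv ⟨ω, h⟩

lemma sum_law {s : Finset V} (hs : ∀ ω, F ω ∈ s) : ∑ v ∈ s, law p F v = ∑ ω, p ω := by
  classical
  unfold law
  rw [sum_comm]
  simp [hs]

lemma entropy_eq_sum {s : Finset V} (hs : ∀ ω, F ω ∈ s) :
    entropy p F = ∑ v ∈ s, negMulLog (law p F v) :=
  tsum_eq_sum fun v hv => by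
    rw [law_eq_zero (by rintro ⟨ω, rfl⟩; exact hv (hs ω)), negMulLog_zero]

lemma entropy_nonneg (hp : ∀ ω, 0 ≤ p ω) (hp₁ : ∑ ω, p ω = 1) : 0 ≤ entropy p F := by
  classical
  rw [entropy_eq_sum (s := univ.image F) (by simp)]
  exact sum_nonneg fun v _ => negMulLog_nonneg (law_nonneg hp v) (law_le_one hp hp₁ v)

lemma entropy_eq_zero_of_forall_eq {v₀ : V} (hF : ∀ ω, F ω = v₀) (hp₁ : ∑ ω, p ω = 1) :
    entropy p F = 0 := by
  have hs : ∀ ω, F ω ∈ ({v₀} : Finset V) := by simpa using hF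
  have hlaw : law p F v₀ = 1 := by simpa [hp₁] using sum_law (p := p) hs
  rw [entropy_eq_sum hs, sum_singleton, hlaw, negMulLog_one]

lemma law_comp_apply_of_injective {G : V → W} (hG : G.Injective) (v : V) :
    law p (G ∘ F) (G v) = law p F v := by
  classical
  simp [law, hG.eq_iff]

lemma entropy_comp_of_injective {G : V → W} (hG : G.Injective) :
    entropy p (G ∘ F) = entropy p F := by
  unfold entropy
  rw [← hG.tsum_eq]
  · simp_rw [law_comp_apply_of_injective hG]
  · intro w hw
    by_contra hwG
    refine hw ?_
    show negMulLog (law p (G ∘ F) w) = 0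
    rw [law_eq_zero (F := G ∘ F) fun ⟨ω, h⟩ => hwG ⟨F ω, h⟩, negMulLog_zero]

lemma law_comp [DecidableEq W] {s : Finset V} (hs : ∀ ω, F ω ∈ s) (G : V → W) (w : W) :
    law p (G ∘ F) w = ∑ v ∈ s with G v = w, law p F v := by
  classical
  unfold law
  rw [sum_comm]
  refine sum_congr rfl fun ω _ => ?_
  rw [sum_ite_eq]
  simp [hs]

lemma entropy_comp_le (hp : ∀ ω, 0 ≤ p ω) (G : V → W) : entropy p (G ∘ F) ≤ entropy p F := by
  classical
  set s := univ.image F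
  have hs : ∀ ω, F ω ∈ s := by simp [s]
  rw [entropy_eq_sum (s := s.image G) (by simp [s]), entropy_eq_sum hs]
  calc ∑ w ∈ s.image G, negMulLog (law p (G ∘ F) w)
      ≤ ∑ w ∈ s.image G, ∑ v ∈ s with G v = w, negMulLog (law p F v) :=
        sum_le_sum fun w _ => by
          rw [law_comp hs]
          exact negMulLog_sum_le fun v _ => law_nonneg hp v
    _ = ∑ v ∈ s, negMulLog (law p F v) :=
        sum_fiberwise_of_maps_to (fun v hv => mem_image_of_mem G hv) _

lemma law_prodMap (p₁ : Ω₁ → ℝ) (p₂ : Ω₂ → ℝ) (F₁ : Ω₁ → V₁) (F₂ : Ω₂ → V₂) (v : V₁ × V₂) :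
    law (fun ω => p₁ ω.1 * p₂ ω.2) (Prod.map F₁ F₂) v = law p₁ F₁ v.1 * law p₂ F₂ v.2 := by
  classical
  simp only [law, sum_mul_sum, Fintype.sum_prod_type, Prod.map, Prod.ext_iff]
  refine sum_congr rfl fun ω₁ _ => sum_congr rfl fun ω₂ _ => ?_
  split_ifs <;> simp_all

lemma entropy_prodMap {p₁ : Ω₁ → ℝ} {p₂ : Ω₂ → ℝ} (hp₁ : ∑ ω, p₁ ω = 1) (hp₂ : ∑ ω, p₂ ω = 1)
    (F₁ : Ω₁ → V₁) (F₂ : Ω₂ → V₂) :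
    entropy (fun ω => p₁ ω.1 * p₂ ω.2) (Prod.map F₁ F₂) = entropy p₁ F₁ + entropy p₂ F₂ := by
  classical
  have hs₁ : ∀ ω, F₁ ω ∈ univ.image F₁ := by simp
  have hs₂ : ∀ ω, F₂ ω ∈ univ.image F₂ := by simp
  rw [entropy_eq_sum (s := univ.image F₁ ×ˢ univ.image F₂) (by simp), entropy_eq_sum hs₁,
    entropy_eq_sum hs₂]
  simp_rw [law_prodMap, negMulLog_mul, sum_product, sum_add_distrib, ← mul_sum, ← sum_mul,
    sum_law hs₁, sum_law hs₂, hp₁, hp₂, one_mul]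

lemma law_optionMap_none (μ : ℝ) :
    law (fun o => o.elim (1 - μ) (μ * p ·)) (Option.map F) none = 1 - μ := by
  simp [law, Fintype.sum_option]

lemma law_optionMap_some (μ : ℝ) (v : V) :
    law (fun o => o.elim (1 - μ) (μ * p ·)) (Option.map F) (some v) = μ * law p F v := by
  classical
  simp [law, Fintype.sum_option, mul_sum]

lemma entropy_optionMap (hp₁ : ∑ ω, p ω = 1) (μ : ℝ) :
    entropy (fun o => o.elim (1 - μ) (μ * p ·)) (Option.map F) =
      binEntropy μ + μ * entropy p F := by
  classical
  have hs : ∀ ω, F ω ∈ univ.image F := by simp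
  rw [entropy_eq_sum (s := (univ.image F).insertNone) (by rintro (_ | ω) <;> simp),
    entropy_eq_sum hs, sum_insertNone, law_optionMap_none]
  simp_rw [law_optionMap_some, negMulLog_mul, sum_add_distrib, ← sum_mul, ← mul_sum, sum_law hs,
    hp₁, binEntropy_eq_negMulLog_add_negMulLog_one_sub]
  ring

lemma entropy_comp_equiv (e : Ω₁ ≃ Ω) : entropy (p ∘ e) (F ∘ e) = entropy p F := by
  classical
  have hlaw : ∀ v, law (p ∘ e) (F ∘ e) v = law p F v := fun v =>
    e.sum_comp fun ω => if F ω = v then p ω else 0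
  simp only [entropy, hlaw]

variable {n : ℕ}

/-- `entropyOn` over an arbitrary finite sample space. -/
noncomputable def entropyProfile (p : Ω → ℝ) (X : Fin n → Ω → ℕ) (α : Finset (Fin n)) : ℝ :=
  entropy p (fun ω (i : α) => X i ω) / log 2

lemma entropyOn_eq_entropyProfile {N : ℕ} (p : Fin N → ℝ) (X : Fin n → Fin N → ℕ) :
    entropyOn p X = entropyProfile p X := by
  classical
  funext α
  simp only [entropyOn, entropyProfile, entropy, law, marginalProb, sum_filter, funext_iff]

variable (X : Fin n → Ω → ℕ)

lemma entropyProfile_nonneg (hp : ∀ ω, 0 ≤ p ω) (hp₁ : ∑ ω, p ω = 1) (α : Finset (Fin n)) :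
    0 ≤ entropyProfile p X α :=
  div_nonneg (entropy_nonneg hp hp₁) (log_nonneg one_le_two)

lemma entropyProfile_le_univ (hp : ∀ ω, 0 ≤ p ω) (α : Finset (Fin n)) :
    entropyProfile p X α ≤ entropyProfile p X univ :=
  div_le_div_of_nonneg_right
    (entropy_comp_le (F := fun ω (i : ↥(univ : Finset (Fin n))) => X i ω) hp
      fun w (i : α) => w ⟨i.1, mem_univ _⟩)
    (log_nonneg one_le_two)

lemma entropyProfile_empty (hp₁ : ∑ ω, p ω = 1) : entropyProfile p X ∅ = 0 := by
  rw [entropyProfile, entropy_eq_zero_of_forall_eq (v₀ := isEmptyElim)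
    (fun _ => Subsingleton.elim _ _) hp₁, zero_div]

lemma entropyProfile_pair {p₁ : Ω₁ → ℝ} {p₂ : Ω₂ → ℝ} (hp₁ : ∑ ω, p₁ ω = 1)
    (hp₂ : ∑ ω, p₂ ω = 1) (X₁ : Fin n → Ω₁ → ℕ) (X₂ : Fin n → Ω₂ → ℕ) :
    entropyProfile (fun ω : Ω₁ × Ω₂ => p₁ ω.1 * p₂ ω.2)
        (fun i ω => Nat.pair (X₁ i ω.1) (X₂ i ω.2)) =
      entropyProfile p₁ X₁ + entropyProfile p₂ X₂ := by
  funext α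
  have hG : Function.Injective fun w : (α → ℕ) × (α → ℕ) => fun i => Nat.pair (w.1 i) (w.2 i) := by
    rintro ⟨a, b⟩ ⟨c, d⟩ h
    simp only [funext_iff, Nat.pair_eq_pair] at h
    simp [funext_iff, h]
  rw [Pi.add_apply, entropyProfile, entropyProfile, entropyProfile, ← add_div,
    ← entropy_prodMap hp₁ hp₂, ← entropy_comp_of_injective hG]
  rfl

/-- Mixing with a constant: with probability `1 - μ` every variable is replaced by `0`, and the
original values are shifted by one so that the two branches remain distinguishable. -/
lemma entropyProfile_option (hp₁ : ∑ ω, p ω = 1) (μ : ℝ) :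
    entropyProfile (fun o : Option Ω => o.elim (1 - μ) (μ * p ·))
        (fun i o => o.elim 0 (X i · + 1)) =
      fun α => μ * entropyProfile p X α + if α = ∅ then 0 else binEntropy μ / log 2 := by
  funext α
  by_cases hα : α = ∅
  · subst hα
    rw [entropyProfile_empty _ (by simp [Fintype.sum_option, ← mul_sum, hp₁]),
      entropyProfile_empty _ hp₁]
    simp
  obtain ⟨i₀, hi₀⟩ := nonempty_iff_ne_empty.2 hα
  set G : Option (α → ℕ) → α → ℕ := fun o => o.elim 0 fun w i => w i + 1
  have hG : G.Injective := by
    rintro (_ | a) (_ | b) h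
    · rfl
    · exact absurd (congrFun h ⟨i₀, hi₀⟩) (by simp [G])
    · exact absurd (congrFun h ⟨i₀, hi₀⟩) (by simp [G])
    · simpa [G, funext_iff] using h
  have hF : (fun o (i : α) => o.elim 0 (X i · + 1)) = G ∘ Option.map fun ω (i : α) => X i ω := by
    funext o
    cases o <;> rfl
  rw [entropyProfile, hF, entropy_comp_of_injective hG, entropy_optionMap hp₁, if_neg hα,
    entropyProfile]
  ring

theorem isEntropic_entropyProfile (hp : ∀ ω, 0 ≤ p ω) (hp₁ : ∑ ω, p ω = 1) :
    IsEntropic n (entropyProfile p X) := by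
  have : Nonempty Ω := by
    by_contra h
    simp [not_nonempty_iff.1 h] at hp₁
  set e := (Fintype.equivFin Ω).symm
  refine ⟨Fintype.card Ω, p ∘ e, fun i => X i ∘ e, Fintype.card_pos, fun ω => hp _,
    by rw [← hp₁]; exact e.sum_comp p, fun α => ?_⟩
  rw [entropyOn_eq_entropyProfile, entropyProfile, entropyProfile]
  exact congrArg (· / log 2) (entropy_comp_equiv e).symm

end Shannon

open Shannon

lemma IsEntropic.exists_eq_entropyProfile {n : ℕ} {h : Finset (Fin n) → ℝ} (hh : IsEntropic n h) :
    ∃ (N : ℕ) (p : Fin N → ℝ) (X : Fin n → Fin N → ℕ),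
      (∀ ω, 0 ≤ p ω) ∧ ∑ ω, p ω = 1 ∧ h = entropyProfile p X := by
  obtain ⟨N, p, X, -, hp, hp₁, hX⟩ := hh
  exact ⟨N, p, X, hp, hp₁, funext fun α =>
    (hX α).trans (congrFun (entropyOn_eq_entropyProfile p X) α)⟩

theorem isEntropic_zero (n : ℕ) : IsEntropic n 0 := by
  have h := isEntropic_entropyProfile (fun (_ : Fin n) (_ : Unit) => 0) (p := fun _ => (1 : ℝ))
    (fun _ => zero_le_one) (by simp)
  convert h using 1
  funext α
  rw [Pi.zero_apply, entropyProfile,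
    entropy_eq_zero_of_forall_eq (v₀ := fun _ => 0) (fun _ => rfl) (by simp), zero_div]

namespace IsEntropic

variable {n : ℕ} {h h₁ h₂ : Finset (Fin n) → ℝ}

lemma nonneg (hh : IsEntropic n h) (α : Finset (Fin n)) : 0 ≤ h α := by
  obtain ⟨N, p, X, hp, hp₁, rfl⟩ := hh.exists_eq_entropyProfile
  exact entropyProfile_nonneg X hp hp₁ α

lemma le_univ (hh : IsEntropic n h) (α : Finset (Fin n)) : h α ≤ h univ := by
  obtain ⟨N, p, X, hp, -, rfl⟩ := hh.exists_eq_entropyProfile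
  exact entropyProfile_le_univ X hp α

lemma add (hh₁ : IsEntropic n h₁) (hh₂ : IsEntropic n h₂) : IsEntropic n (h₁ + h₂) := by
  obtain ⟨N₁, p₁, X₁, hp₁, hs₁, rfl⟩ := hh₁.exists_eq_entropyProfile
  obtain ⟨N₂, p₂, X₂, hp₂, hs₂, rfl⟩ := hh₂.exists_eq_entropyProfile
  rw [← entropyProfile_pair hs₁ hs₂]
  exact isEntropic_entropyProfile _ (fun ω => mul_nonneg (hp₁ _) (hp₂ _))
    (by simp [Fintype.sum_prod_type, ← mul_sum, hs₁, hs₂])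

lemma mix (hh : IsEntropic n h) {μ : ℝ} (hμ₀ : 0 ≤ μ) (hμ₁ : μ ≤ 1) :
    IsEntropic n fun α => μ * h α + if α = ∅ then 0 else binEntropy μ / log 2 := by
  obtain ⟨N, p, X, hp, hp₁, rfl⟩ := hh.exists_eq_entropyProfile
  rw [← entropyProfile_option X hp₁]
  refine isEntropic_entropyProfile _ ?_ (by simp [Fintype.sum_option, ← mul_sum, hp₁])
  rintro (_ | ω)
  · simpa using hμ₁
  · exact mul_nonneg hμ₀ (hp ω)

lemma natCast_smul (hh : IsEntropic n h) (m : ℕ) : IsEntropic n ((m : ℝ) • h) := by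
  induction m with
  | zero => simpa using isEntropic_zero n
  | succ m ih => simpa [add_smul] using ih.add hh

/-- Time sharing: `t • h` is the limit of mixtures of `m • h` with weight `t / m`, whose
binary-entropy overhead vanishes as `m → ∞`. -/
lemma smul_mem_almostEntropic (hh : IsEntropic n h) {t : ℝ} (ht : 0 ≤ t) :
    t • h ∈ almostEntropic n := by
  set g : ℕ → Finset (Fin n) → ℝ :=
    fun m => t • h + fun α => if α = ∅ then 0 else binEntropy (t / m) / log 2
  have hg : ∀ᶠ m in atTop, g m ∈ {h | IsEntropic n h} := by
    filter_upwards [eventually_ge_atTop ⌈t⌉₊, eventually_gt_atTop 0] with m htm hm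
    have hm' : (0 : ℝ) < m := by exact_mod_cast hm
    convert (hh.natCast_smul m).mix (div_nonneg ht hm'.le)
      (div_le_one_of_le₀ (Nat.ceil_le.1 htm) hm'.le) using 2 with α
    simp only [g, Pi.add_apply, Pi.smul_apply, smul_eq_mul]
    field_simp
  have hoverhead : Tendsto (fun m : ℕ => fun α : Finset (Fin n) =>
      if α = ∅ then 0 else binEntropy (t / m) / log 2) atTop (𝓝 0) := by
    refine tendsto_pi_nhds.2 fun α => ?_
    split_ifs
    · exact tendsto_const_nhds
    · simpa using ((binEntropy_continuous.tendsto 0).comp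
        (tendsto_const_div_atTop_nhds_zero_nat t)).div_const (log 2)
  exact mem_closure_of_tendsto (by simpa using tendsto_const_nhds.add hoverhead) hg

end IsEntropic

def almostEntropicCone (n : ℕ) : ProperCone ℝ (Finset (Fin n) → ℝ) where
  carrier := almostEntropic n
  zero_mem' := subset_closure (isEntropic_zero n)
  add_mem' hx hy := map_mem_closure₂ continuous_add hx hy fun _ ha _ hb => ha.add hb
  smul_mem' c x hx := by
    simpa [almostEntropic, closure_closure] using map_mem_closure (continuous_const_smul (c : ℝ)) hx
      fun _ hy => hy.smul_mem_almostEntropic c.2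
  isClosed' := isClosed_closure

variable {n : ℕ}

lemma almostEntropic_subset :
    almostEntropic n ⊆ {h | ∀ α, 0 ≤ h α ∧ h α ≤ h univ} := by
  refine closure_minimal (fun h hh α => ⟨hh.nonneg α, hh.le_univ α⟩) ?_
  simp only [Set.ofPred_forall, Set.ofPred_and]
  exact isClosed_iInter fun α => (isClosed_le continuous_const (continuous_apply α)).inter
    (isClosed_le (continuous_apply α) (continuous_apply univ))

lemma norm_le_apply_univ_of_mem_almostEntropic {h : Finset (Fin n) → ℝ}
    (hh : h ∈ almostEntropic n) : ‖h‖ ≤ h univ := by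
  have hbound := almostEntropic_subset hh
  refine (pi_norm_le_iff_of_nonneg (hbound univ).1).2 fun α => ?_
  rw [Real.norm_eq_abs, abs_of_nonneg (hbound α).1]
  exact (hbound α).2

theorem stmt9_general (n : ℕ) (k : ℕ)
    (c : Fin k → Finset (Fin n) → ℝ) (c₀ : Finset (Fin n) → ℝ) :
    ((∀ h ∈ almostEntropic n,
        (∀ i : Fin k, 0 ≤ ∑ α, c i α * h α) → 0 ≤ ∑ α, c₀ α * h α) ↔
      (∀ ε > (0 : ℝ), ∃ lam : Fin k → ℝ, (∀ i, 0 ≤ lam i) ∧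
        ∀ h ∈ almostEntropic n,
          (∑ i, lam i * ∑ α, c i α * h α) ≤ (∑ α, c₀ α * h α) + ε * h Finset.univ)) ∧
    ((∃ h ∈ almostEntropic n, ∀ i : Fin k, 0 < ∑ α, c i α * h α) →
      ((∀ h ∈ almostEntropic n,
          (∀ i : Fin k, 0 ≤ ∑ α, c i α * h α) → 0 ≤ ∑ α, c₀ α * h α) ↔
        (∃ lam : Fin k → ℝ, (∀ i, 0 ≤ lam i) ∧
          ∀ h ∈ almostEntropic n,
            (∑ i, lam i * ∑ α, c i α * h α) ≤ ∑ α, c₀ α * h α))) := by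
  have approx : (∀ h ∈ almostEntropic n,
        (∀ i : Fin k, 0 ≤ ∑ α, c i α * h α) → 0 ≤ ∑ α, c₀ α * h α) →
      ∀ ε > (0 : ℝ), ∃ lam : Fin k → ℝ, (∀ i, 0 ≤ lam i) ∧ ∀ h ∈ almostEntropic n,
        (∑ i, lam i * ∑ α, c i α * h α) ≤ (∑ α, c₀ α * h α) + ε * h Finset.univ := by
    intro hyp ε hε
    obtain ⟨lam, hlam, hle⟩ :=
      exists_sum_mul_dotProduct_le_add_mul_norm (K := almostEntropicCone n) hyp hε
    exact ⟨lam, hlam, fun h hh => (hle h hh).trans (add_le_add_right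
      (mul_le_mul_of_nonneg_left (norm_le_apply_univ_of_mem_almostEntropic hh) hε.le) _)⟩
  have hr : ∀ h ∈ almostEntropic n, 0 ≤ h Finset.univ := fun h hh =>
    (norm_nonneg h).trans (norm_le_apply_univ_of_mem_almostEntropic hh)
  refine ⟨⟨approx, fun happrox h hh => nonneg_of_forall_sum_mul_le_add_mul hr happrox hh⟩, ?_⟩
  rintro ⟨h₀, hh₀, hslack⟩
  refine ⟨fun hyp => exists_forall_sum_mul_le_of_pos hh₀ hslack (approx hyp), ?_⟩
  rintro ⟨lam, hlam, hle⟩ h hh hant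
  exact (sum_nonneg fun i _ => mul_nonneg (hlam i) (hant i)).trans (hle h hh)

/-- Corollary 4.10: moving all antecedents of a conditional information
inequality, valid over the almost-entropic cone `cl Γ_n^*`, into the consequent; with the
`ε = 0` refinement when the antecedents `{c_1, …, c_k}` have slack. -/
theorem stmt9 (n : ℕ) (hn : 1 ≤ n) (k : ℕ)
    (c : Fin k → Finset (Fin n) → ℝ) (c₀ : Finset (Fin n) → ℝ) :
    ((∀ h ∈ almostEntropic n,
        (∀ i : Fin k, 0 ≤ ∑ α, c i α * h α) → 0 ≤ ∑ α, c₀ α * h α) ↔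
      (∀ ε > (0 : ℝ), ∃ lam : Fin k → ℝ, (∀ i, 0 ≤ lam i) ∧
        ∀ h ∈ almostEntropic n,
          (∑ i, lam i * ∑ α, c i α * h α) ≤ (∑ α, c₀ α * h α) + ε * h Finset.univ)) ∧
    ((∃ h ∈ almostEntropic n, ∀ i : Fin k, 0 < ∑ α, c i α * h α) →
      ((∀ h ∈ almostEntropic n,
          (∀ i : Fin k, 0 ≤ ∑ α, c i α * h α) → 0 ≤ ∑ α, c₀ α * h α) ↔
        (∃ lam : Fin k → ℝ, (∀ i, 0 ≤ lam i) ∧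
          ∀ h ∈ almostEntropic n,
            (∑ i, lam i * ∑ α, c i α * h α) ≤ ∑ α, c₀ α * h α))) :=
  stmt9_general n k c c₀
end

section
/- Let c_1, …, c_k, c ∈ ℝ^(2^n) and assume each c_i is tight, i.e. c_i·h ≤ 0 for all h ∈ cl Γ_n^*. Then the following are equivalent: (1) for all h ∈ cl Γ_n^*, if c_i·h ≥ 0 for all i ∈ {1,…,k} then c·h ≥ 0; (2) for every positive natural number p there exists a natural number q such that for all h ∈ cl Γ_n^*, c·h + (1/p)·h(Fin n) ≥ q·∑_{i=1}^{k} c_i·h, where h(Fin n) denotes the value of h on the full set of all n indices. -/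
/-!
Entropic vectors are closed under addition (independent product) and, up to a binary-entropy
term, under scaling by `δ ∈ [0, 1]` (mix with a constant outcome of probability `1 - δ`).
Diluting `m • h` by `r / m` and letting `m → ∞` makes that term vanish, so `cl Γ_n^*` is a
closed cone. Its elements satisfy `0 ≤ h α ≤ h [n]`, so it has the compact base `h [n] = 1`.
On a compact base the open sets `{q · ∑ c_i·h < c·h + 1/p}` increase with `q` and, by
validity and tightness, cover it; so one `q` works there, and homogeneity extends it to the
cone. Conversely, where all `c_i·h` vanish the approximate inequalities give
`c·h ≥ -h [n] / p` for every `p`.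
-/

open Real Finset Filter Topology

lemma IsCompact.exists_nat_mul_le_add {E : Type*} [TopologicalSpace E] {B : Set E}
    (hB : IsCompact B) {S L : E → ℝ} (hS : Continuous S) (hL : Continuous L)
    (hS0 : ∀ x ∈ B, S x ≤ 0) (hSL : ∀ x ∈ B, S x = 0 → 0 ≤ L x) {ε : ℝ} (hε : 0 < ε) :
    ∃ q : ℕ, ∀ x ∈ B, q * S x ≤ L x + ε := by
  have hcover : B ⊆ ⋃ q : ℕ, {x | q * S x < L x + ε} := by
    intro x hx
    rcases (hS0 x hx).lt_or_eq with hneg | hzero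
    · obtain ⟨q, hq⟩ := exists_nat_gt ((L x + ε) / S x)
      exact Set.mem_iUnion.2 ⟨q, (div_lt_iff_of_neg hneg).1 hq⟩
    · refine Set.mem_iUnion.2 ⟨0, show ((0 : ℕ) : ℝ) * S x < L x + ε from ?_⟩
      rw [Nat.cast_zero, zero_mul]
      linarith [hSL x hx hzero]
  obtain ⟨s, hs⟩ := hB.elim_finite_subcover _
    (fun q => isOpen_lt (continuous_const.mul hS) (hL.add continuous_const)) hcover
  refine ⟨s.sup id, fun x hx => ?_⟩
  obtain ⟨j, hj, hjx⟩ := Set.mem_iUnion₂.1 (hs hx)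
  calc ((s.sup id : ℕ) : ℝ) * S x ≤ j * S x :=
        mul_le_mul_of_nonpos_right (by exact_mod_cast le_sup (f := id) hj) (hS0 x hx)
    _ ≤ L x + ε := le_of_lt hjx

section ConeWithCompactBase

variable {E : Type*} [AddCommGroup E] [Module ℝ E] [TopologicalSpace E] {K : Set E}
  {t : E →L[ℝ] ℝ}

lemma nonpos_on_cone_of_nonpos_on_base (hK : ∀ x ∈ K, ∀ r : ℝ, 0 ≤ r → r • x ∈ K)
    (ht : ∀ x ∈ K, x ≠ 0 → 0 < t x) {f : E →L[ℝ] ℝ} (hf : ∀ x ∈ K, t x = 1 → f x ≤ 0) :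
    ∀ x ∈ K, f x ≤ 0 := by
  intro x hx
  rcases eq_or_ne x 0 with rfl | hx0
  · simp
  have htx := ht x hx hx0
  have hbase := hf _ (hK x hx _ (inv_nonneg.2 htx.le)) (by simp [htx.ne'])
  rw [map_smul, smul_eq_mul] at hbase
  exact nonpos_of_mul_nonpos_right hbase (inv_pos.2 htx)

theorem conditionalIneq_iff_of_isCompact_base (hK : ∀ x ∈ K, ∀ r : ℝ, 0 ≤ r → r • x ∈ K)
    (ht : ∀ x ∈ K, x ≠ 0 → 0 < t x) (hbase : IsCompact (K ∩ {x | t x = 1}))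
    {ι : Type*} [Fintype ι] (c : ι → E →L[ℝ] ℝ) (c₀ : E →L[ℝ] ℝ)
    (htight : ∀ i, ∀ x ∈ K, c i x ≤ 0) :
    (∀ x ∈ K, (∀ i, 0 ≤ c i x) → 0 ≤ c₀ x) ↔
      ∀ p : ℕ, 0 < p → ∃ q : ℕ, ∀ x ∈ K, (q : ℝ) * ∑ i, c i x ≤ c₀ x + 1 / p * t x := by
  have hsum_eq_zero : ∀ x ∈ K, ∑ i, c i x = 0 ↔ ∀ i, 0 ≤ c i x := fun x hx => by
    rw [sum_eq_zero_iff_of_nonpos fun i _ => htight i x hx]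
    exact forall_congr' fun i => by simp [le_antisymm_iff, htight i x hx]
  constructor
  · intro hvalid p hp
    obtain ⟨q, hq⟩ := hbase.exists_nat_mul_le_add (S := fun x => ∑ i, c i x) (L := c₀)
      (by fun_prop) c₀.continuous (fun x hx => sum_nonpos fun i _ => htight i x hx.1)
      (fun x hx hS => hvalid x hx.1 ((hsum_eq_zero x hx.1).1 hS))
      (one_div_pos.2 (Nat.cast_pos.2 hp))
    refine ⟨q, fun x hx => ?_⟩
    have hcone := nonpos_on_cone_of_nonpos_on_base hK ht
      (f := (q : ℝ) • ∑ i, c i - c₀ - (1 / p : ℝ) • t) (fun y hy hty => by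
        have := hq y ⟨hy, hty⟩
        simp only [sub_apply, smul_apply, _root_.sum_apply, smul_eq_mul, hty]
        linarith) x hx
    simp only [sub_apply, smul_apply, _root_.sum_apply, smul_eq_mul] at hcone
    linarith
  · intro happrox x hx hc
    have hS : ∑ i, c i x = 0 := (hsum_eq_zero x hx).2 hc
    have hlim : Tendsto (fun p : ℕ => c₀ x + 1 / p * t x) atTop (𝓝 (c₀ x)) := by
      simpa using tendsto_const_nhds.add (tendsto_one_div_atTop_nhds_zero_nat.mul_const (t x))
    refine ge_of_tendsto hlim ((eventually_gt_atTop 0).mono fun p hp => ?_)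
    obtain ⟨q, hq⟩ := happrox p hp
    simpa [hS] using hq x hx

end ConeWithCompactBase

section Entropy

variable {n N : ℕ} {p : Fin N → ℝ} {X : Fin n → Fin N → ℕ} {α : Finset (Fin n)}

def jointOutcome (X : Fin n → Fin N → ℕ) (α : Finset (Fin n)) (ω : Fin N) :
    {i // i ∈ α} → ℕ :=
  fun i => X i.1 ω

lemma marginalProb_eq_sum_filter (p : Fin N → ℝ) (X : Fin n → Fin N → ℕ)
    (α : Finset (Fin n)) (v : {i // i ∈ α} → ℕ) :
    marginalProb p X α v = ∑ ω with jointOutcome X α ω = v, p ω := by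
  simp only [marginalProb, jointOutcome, funext_iff]

lemma le_marginalProb_jointOutcome (hp : ∀ ω, 0 ≤ p ω) (ω : Fin N) :
    p ω ≤ marginalProb p X α (jointOutcome X α ω) := by
  rw [marginalProb_eq_sum_filter]
  exact single_le_sum (fun x _ => hp x) (by simp)

lemma marginalProb_jointOutcome_ne_zero (hp : ∀ ω, 0 ≤ p ω) {ω : Fin N} (hω : p ω ≠ 0) :
    marginalProb p X α (jointOutcome X α ω) ≠ 0 :=
  (((hp ω).lt_of_ne' hω).trans_le (le_marginalProb_jointOutcome hp ω)).ne'

lemma entropyOn_eq_sum (p : Fin N → ℝ) (X : Fin n → Fin N → ℕ) (α : Finset (Fin n)) :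
    entropyOn p X α
      = (∑ ω, p ω * -log (marginalProb p X α (jointOutcome X α ω))) / log 2 := by
  have hmaps : ∀ ω ∈ univ, jointOutcome X α ω ∈ univ.image (jointOutcome X α) :=
    fun ω _ => mem_image_of_mem _ (mem_univ ω)
  rw [entropyOn, tsum_eq_sum (s := univ.image (jointOutcome X α)),
    ← sum_fiberwise_of_maps_to hmaps]
  · congr 1
    refine sum_congr rfl fun v _ => ?_
    rw [negMulLog, neg_mul_comm]
    nth_rw 1 [marginalProb_eq_sum_filter]
    rw [sum_mul]
    exact sum_congr rfl fun ω hω => by rw [(mem_filter.1 hω).2]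
  · intro v hv
    rw [marginalProb_eq_sum_filter, sum_eq_zero fun ω hω => absurd (mem_filter.1 hω).2 ?_,
      negMulLog_zero]
    rintro rfl
    exact hv (mem_image_of_mem _ (mem_univ ω))

lemma entropyOn_empty (hs : ∑ ω, p ω = 1) : entropyOn p X ∅ = 0 := by
  have hmarg : ∀ ω, marginalProb p X ∅ (jointOutcome X ∅ ω) = 1 := fun ω => by
    rw [marginalProb_eq_sum_filter,
      filter_true_of_mem fun _ _ => funext fun i => (notMem_empty _ i.2).elim, hs]
  simp [entropyOn_eq_sum, hmarg]

lemma marginalProb_jointOutcome_antitone (hp : ∀ ω, 0 ≤ p ω) {β : Finset (Fin n)}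
    (hαβ : α ⊆ β) (ω : Fin N) :
    marginalProb p X β (jointOutcome X β ω) ≤ marginalProb p X α (jointOutcome X α ω) := by
  rw [marginalProb_eq_sum_filter, marginalProb_eq_sum_filter]
  refine sum_le_sum_of_subset_of_nonneg (fun x => ?_) fun x _ _ => hp x
  simp only [mem_filter, mem_univ, true_and, jointOutcome, funext_iff]
  exact fun hx i => hx ⟨i, hαβ i.2⟩

lemma entropyOn_mono (hp : ∀ ω, 0 ≤ p ω) {β : Finset (Fin n)} (hαβ : α ⊆ β) :
    entropyOn p X α ≤ entropyOn p X β := by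
  rw [entropyOn_eq_sum, entropyOn_eq_sum]
  refine div_le_div_of_nonneg_right (sum_le_sum fun ω _ => ?_) (log_nonneg one_le_two)
  rcases (hp ω).eq_or_lt with h0 | hpos
  · simp [← h0]
  have hβ := hpos.trans_le (le_marginalProb_jointOutcome (X := X) (α := β) hp ω)
  exact mul_le_mul_of_nonneg_left
    (neg_le_neg (log_le_log hβ (marginalProb_jointOutcome_antitone hp hαβ ω))) (hp ω)

lemma entropyOn_nonneg (hp : ∀ ω, 0 ≤ p ω) (hs : ∑ ω, p ω = 1) : 0 ≤ entropyOn p X α :=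
  entropyOn_empty (X := X) hs ▸ entropyOn_mono hp (empty_subset α)

end Entropy

lemma mul_neg_log_mul {x a b : ℝ} (h : x ≠ 0 → a ≠ 0 ∧ b ≠ 0) :
    x * -log (a * b) = x * -log a + x * -log b := by
  rcases eq_or_ne x 0 with rfl | hx
  · simp
  rw [log_mul (h hx).1 (h hx).2]
  ring

section Product

variable {n N₁ N₂ : ℕ} {p₁ : Fin N₁ → ℝ} {p₂ : Fin N₂ → ℝ}
  {X₁ : Fin n → Fin N₁ → ℕ} {X₂ : Fin n → Fin N₂ → ℕ}

def prodProb (p₁ : Fin N₁ → ℝ) (p₂ : Fin N₂ → ℝ) : Fin (N₁ * N₂) → ℝ :=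
  fun ω => p₁ (finProdFinEquiv.symm ω).1 * p₂ (finProdFinEquiv.symm ω).2

/-- `Nat.pair` merges the two outcomes injectively into one natural number. -/
def prodVars (X₁ : Fin n → Fin N₁ → ℕ) (X₂ : Fin n → Fin N₂ → ℕ) :
    Fin n → Fin (N₁ * N₂) → ℕ :=
  fun i ω => Nat.pair (X₁ i (finProdFinEquiv.symm ω).1) (X₂ i (finProdFinEquiv.symm ω).2)

lemma sum_fin_mul_eq_sum_sum {M : Type*} [AddCommMonoid M] (f : Fin (N₁ * N₂) → M) :
    ∑ ω, f ω = ∑ a, ∑ b, f (finProdFinEquiv (a, b)) := by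
  rw [← Fintype.sum_prod_type', finProdFinEquiv.sum_comp]

lemma sum_prodProb : ∑ ω, prodProb p₁ p₂ ω = (∑ a, p₁ a) * ∑ b, p₂ b := by
  simp only [sum_fin_mul_eq_sum_sum, prodProb, Equiv.symm_apply_apply, sum_mul_sum]

lemma marginalProb_prod (α : Finset (Fin n)) (v₁ v₂ : {i // i ∈ α} → ℕ) :
    marginalProb (prodProb p₁ p₂) (prodVars X₁ X₂) α (fun i => Nat.pair (v₁ i) (v₂ i))
      = marginalProb p₁ X₁ α v₁ * marginalProb p₂ X₂ α v₂ := by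
  simp only [marginalProb, sum_filter, sum_mul_sum, ite_zero_mul_ite_zero]
  rw [sum_fin_mul_eq_sum_sum]
  simp [prodProb, prodVars, forall_and]

lemma entropyOn_prod (hp₁ : ∀ a, 0 ≤ p₁ a) (hs₁ : ∑ a, p₁ a = 1)
    (hp₂ : ∀ b, 0 ≤ p₂ b) (hs₂ : ∑ b, p₂ b = 1) (α : Finset (Fin n)) :
    entropyOn (prodProb p₁ p₂) (prodVars X₁ X₂) α
      = entropyOn p₁ X₁ α + entropyOn p₂ X₂ α := by
  have hterm : ∀ a b, prodProb p₁ p₂ (finProdFinEquiv (a, b)) *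
      -log (marginalProb (prodProb p₁ p₂) (prodVars X₁ X₂) α
        (jointOutcome (prodVars X₁ X₂) α (finProdFinEquiv (a, b))))
        = p₂ b * (p₁ a * -log (marginalProb p₁ X₁ α (jointOutcome X₁ α a)))
          + p₁ a * (p₂ b * -log (marginalProb p₂ X₂ α (jointOutcome X₂ α b))) := fun a b => by
    have hout : jointOutcome (prodVars X₁ X₂) α (finProdFinEquiv (a, b))
        = fun i => Nat.pair (jointOutcome X₁ α a i) (jointOutcome X₂ α b i) := by
      ext; simp [jointOutcome, prodVars]
    rw [hout, marginalProb_prod, prodProb, Equiv.symm_apply_apply,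
      mul_neg_log_mul fun h => ⟨marginalProb_jointOutcome_ne_zero hp₁ (left_ne_zero_of_mul h),
        marginalProb_jointOutcome_ne_zero hp₂ (right_ne_zero_of_mul h)⟩]
    ring
  simp only [entropyOn_eq_sum, ← add_div, sum_fin_mul_eq_sum_sum, hterm, sum_add_distrib,
    ← sum_mul, ← mul_sum, hs₁, hs₂, one_mul]

end Product

section Dilution

variable {n N : ℕ} {p : Fin N → ℝ} {X : Fin n → Fin N → ℕ} {α : Finset (Fin n)}

def diluteProb (δ : ℝ) (p : Fin N → ℝ) : Fin (N + 1) → ℝ :=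
  Fin.lastCases (1 - δ) fun ω => δ * p ω

/-- The extra atom `Fin.last N` gives every variable the value `0`; the old values are
shifted by one so that it stays distinguishable from them. -/
def diluteVars (X : Fin n → Fin N → ℕ) : Fin n → Fin (N + 1) → ℕ :=
  fun i => Fin.lastCases 0 fun ω => X i ω + 1

lemma marginalProb_dilute_zero (δ : ℝ) (hα : α.Nonempty) :
    marginalProb (diluteProb δ p) (diluteVars X) α (fun _ => 0) = 1 - δ := by
  rw [marginalProb, sum_filter, Fin.sum_univ_castSucc]
  simp [diluteProb, diluteVars, not_forall_not.2 hα]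

lemma marginalProb_dilute_succ (δ : ℝ) (hα : α.Nonempty) (v : {i // i ∈ α} → ℕ) :
    marginalProb (diluteProb δ p) (diluteVars X) α (fun i => v i + 1)
      = δ * marginalProb p X α v := by
  rw [marginalProb, marginalProb, sum_filter, sum_filter, Fin.sum_univ_castSucc, mul_sum]
  simp [diluteProb, diluteVars, not_forall_not.2 hα]

lemma entropyOn_dilute (hp : ∀ ω, 0 ≤ p ω) (hs : ∑ ω, p ω = 1) (δ : ℝ) (hα : α.Nonempty) :
    entropyOn (diluteProb δ p) (diluteVars X) α
      = binEntropy δ / log 2 + δ * entropyOn p X α := by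
  have hlast : jointOutcome (diluteVars X) α (Fin.last N) = fun _ => 0 := by
    ext; simp [jointOutcome, diluteVars]
  have hterm : ∀ ω : Fin N, diluteProb δ p ω.castSucc * -log (marginalProb (diluteProb δ p)
      (diluteVars X) α (jointOutcome (diluteVars X) α ω.castSucc))
        = -log δ * δ * p ω + δ * (p ω * -log (marginalProb p X α (jointOutcome X α ω))) := by
    intro ω
    have hout :
        jointOutcome (diluteVars X) α ω.castSucc = fun i => jointOutcome X α ω i + 1 := by
      ext; simp [jointOutcome, diluteVars]
    rw [hout, marginalProb_dilute_succ δ hα, diluteProb, Fin.lastCases_castSucc,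
      mul_neg_log_mul fun h => ⟨left_ne_zero_of_mul h,
        marginalProb_jointOutcome_ne_zero hp (right_ne_zero_of_mul h)⟩]
    ring
  rw [entropyOn_eq_sum, entropyOn_eq_sum, Fin.sum_univ_castSucc, hlast,
    marginalProb_dilute_zero δ hα, sum_congr rfl fun ω _ => hterm ω]
  simp only [sum_add_distrib, ← mul_sum, hs, diluteProb, Fin.lastCases_last,
    binEntropy_eq_negMulLog_add_negMulLog_one_sub, negMulLog]
  ring

end Dilution

section Entropic

variable {n : ℕ} {h h₁ h₂ : Finset (Fin n) → ℝ}

lemma IsEntropic.add_s10 (H₁ : IsEntropic n h₁) (H₂ : IsEntropic n h₂) :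
    IsEntropic n (h₁ + h₂) := by
  obtain ⟨N₁, p₁, X₁, hN₁, hp₁, hs₁, hh₁⟩ := H₁
  obtain ⟨N₂, p₂, X₂, hN₂, hp₂, hs₂, hh₂⟩ := H₂
  refine ⟨N₁ * N₂, prodProb p₁ p₂, prodVars X₁ X₂, Nat.mul_pos hN₁ hN₂,
    fun ω => mul_nonneg (hp₁ _) (hp₂ _), by rw [sum_prodProb, hs₁, hs₂, one_mul], fun α => ?_⟩
  rw [Pi.add_apply, hh₁, hh₂, entropyOn_prod hp₁ hs₁ hp₂ hs₂]

lemma IsEntropic.natCast_smul_s10 (H : IsEntropic n h) {m : ℕ} (hm : 1 ≤ m) :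
    IsEntropic n ((m : ℝ) • h) := by
  induction m, hm using Nat.le_induction with
  | base => simpa using H
  | succ m _ ih => simpa [add_smul] using ih.add_s10 H

lemma IsEntropic.dilute (H : IsEntropic n h) {δ : ℝ} (hδ₀ : 0 ≤ δ) (hδ₁ : δ ≤ 1) :
    IsEntropic n fun α => (if α.Nonempty then binEntropy δ / log 2 else 0) + δ * h α := by
  obtain ⟨N, p, X, -, hp, hs, hh⟩ := H
  have hs' : ∑ ω, diluteProb δ p ω = 1 := by
    simp [Fin.sum_univ_castSucc, diluteProb, ← mul_sum, hs]
  refine ⟨N + 1, diluteProb δ p, diluteVars X, N.succ_pos, fun ω => ?_, hs', fun α => ?_⟩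
  · induction ω using Fin.lastCases with
    | last => simpa [diluteProb] using hδ₁
    | cast ω => simpa [diluteProb] using mul_nonneg hδ₀ (hp ω)
  · rcases α.eq_empty_or_nonempty with rfl | hα
    · simp [hh, entropyOn_empty hs, entropyOn_empty hs']
    · simp [hα, hh, entropyOn_dilute hp hs δ hα]

lemma IsEntropic.smul_mem_almostEntropic_s10 (H : IsEntropic n h) {r : ℝ} (hr : 0 ≤ r) :
    r • h ∈ almostEntropic n := by
  -- `seq m` is `m • h` diluted by `r / m`.
  set seq : ℕ → Finset (Fin n) → ℝ :=
    fun m α => (if α.Nonempty then binEntropy (r / m) / log 2 else 0) + r * h α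
  have hseq : ∀ m ≥ max 1 ⌈r⌉₊, IsEntropic n (seq m) := fun m hm => by
    have hm₁ : 1 ≤ m := le_of_max_le_left hm
    have hrm : r ≤ m := Nat.ceil_le.1 (le_of_max_le_right hm)
    convert (H.natCast_smul_s10 hm₁).dilute (div_nonneg hr m.cast_nonneg)
      (div_le_one_of_le₀ hrm m.cast_nonneg) using 3 with α
    have : (m : ℝ) ≠ 0 := by positivity
    simp only [Pi.smul_apply, smul_eq_mul]
    field_simp
  have hbin : Tendsto (fun m : ℕ => binEntropy (r / m) / log 2) atTop (𝓝 0) := by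
    simpa using ((binEntropy_continuous.tendsto 0).comp
      (tendsto_const_div_atTop_nhds_zero_nat r)).div_const (log 2)
  have hlim : Tendsto seq atTop (𝓝 (r • h)) := tendsto_pi_nhds.2 fun α => by
    by_cases hα : α.Nonempty
    · simpa [seq, hα] using hbin.add_const (r * h α)
    · simp [seq, hα]
  exact mem_closure_of_tendsto hlim ((eventually_ge_atTop _).mono hseq)

end Entropic

section AlmostEntropic

variable {n : ℕ} {h : Finset (Fin n) → ℝ}

lemma smul_mem_almostEntropic_s10 (hh : h ∈ almostEntropic n) {r : ℝ} (hr : 0 ≤ r) :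
    r • h ∈ almostEntropic n := by
  simpa only [almostEntropic, closure_closure] using
    map_mem_closure (continuous_const_smul r) hh
      fun _ hg => IsEntropic.smul_mem_almostEntropic_s10 hg hr

lemma almostEntropic_nonneg (hh : h ∈ almostEntropic n) (α : Finset (Fin n)) : 0 ≤ h α := by
  refine closure_minimal (fun g hg => ?_) (isClosed_le continuous_const (continuous_apply α)) hh
  obtain ⟨N, p, X, -, hp, hs, hg⟩ := hg
  show 0 ≤ g α
  exact (hg α).symm ▸ entropyOn_nonneg hp hs

lemma almostEntropic_le_univ (hh : h ∈ almostEntropic n) (α : Finset (Fin n)) :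
    h α ≤ h univ := by
  refine closure_minimal (fun g hg => ?_)
    (isClosed_le (continuous_apply α) (continuous_apply univ)) hh
  obtain ⟨N, p, X, -, hp, -, hg⟩ := hg
  show g α ≤ g univ
  simpa only [hg] using entropyOn_mono hp (subset_univ α)

lemma almostEntropic_univ_pos (hh : h ∈ almostEntropic n) (h0 : h ≠ 0) : 0 < h univ := by
  refine (almostEntropic_nonneg hh univ).lt_of_ne' fun hu => h0 (funext fun α => ?_)
  exact le_antisymm ((almostEntropic_le_univ hh α).trans_eq hu) (almostEntropic_nonneg hh α)

lemma isCompact_almostEntropic_inter_univ_eq_one :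
    IsCompact (almostEntropic n ∩ {h | h univ = 1}) := by
  refine (isCompact_Icc (a := 0) (b := 1)).of_isClosed_subset
    (isClosed_closure.inter (isClosed_eq (continuous_apply _) continuous_const)) ?_
  rintro h ⟨hh, hu⟩
  exact ⟨almostEntropic_nonneg hh, fun α => (almostEntropic_le_univ hh α).trans_eq hu⟩

end AlmostEntropic

def dotProductCLM {ι : Type*} [Fintype ι] (c : ι → ℝ) : (ι → ℝ) →L[ℝ] ℝ :=
  ∑ i, c i • ContinuousLinearMap.proj i

@[simp]
lemma dotProductCLM_apply {ι : Type*} [Fintype ι] (c h : ι → ℝ) :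
    dotProductCLM c h = ∑ i, c i * h i := by
  simp [dotProductCLM]

theorem stmt10_general (n : ℕ) (k : ℕ)
    (c : Fin k → Finset (Fin n) → ℝ) (c₀ : Finset (Fin n) → ℝ)
    (htight : ∀ i : Fin k, ∀ h ∈ almostEntropic n, (∑ α, c i α * h α) ≤ 0) :
    (∀ h ∈ almostEntropic n,
        (∀ i : Fin k, 0 ≤ ∑ α, c i α * h α) → 0 ≤ ∑ α, c₀ α * h α) ↔
    (∀ p : ℕ, 0 < p → ∃ q : ℕ, ∀ h ∈ almostEntropic n,
        (q : ℝ) * (∑ i : Fin k, ∑ α, c i α * h α) ≤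
          (∑ α, c₀ α * h α) + (1 / (p : ℝ)) * h Finset.univ) := by
  simpa using conditionalIneq_iff_of_isCompact_base (t := ContinuousLinearMap.proj univ)
    (fun _ hh _ hr => smul_mem_almostEntropic_s10 hh hr)
    (fun _ hh h0 => almostEntropic_univ_pos hh h0)
    isCompact_almostEntropic_inter_univ_eq_one (fun i => dotProductCLM (c i)) (dotProductCLM c₀)
    (by simpa using htight)

/-- for a conditional information inequality over `cl Γ_n^*` whose
antecedents `c_1, …, c_k` are all tight (i.e. `c_i·h ≤ 0` on `cl Γ_n^*`), validity is
equivalent to: for every positive natural `p` there is a natural `q` such that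
`c·h + (1/p)·h([n]) ≥ q·∑_i c_i·h` for all `h ∈ cl Γ_n^*`. -/
theorem stmt10 (n : ℕ) (hn : 1 ≤ n) (k : ℕ)
    (c : Fin k → Finset (Fin n) → ℝ) (c₀ : Finset (Fin n) → ℝ)
    (htight : ∀ i : Fin k, ∀ h ∈ almostEntropic n, (∑ α, c i α * h α) ≤ 0) :
    (∀ h ∈ almostEntropic n,
        (∀ i : Fin k, 0 ≤ ∑ α, c i α * h α) → 0 ≤ ∑ α, c₀ α * h α) ↔
    (∀ p : ℕ, 0 < p → ∃ q : ℕ, ∀ h ∈ almostEntropic n,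
        (q : ℝ) * (∑ i : Fin k, ∑ α, c i α * h α) ≤
          (∑ α, c₀ α * h α) + (1 / (p : ℝ)) * h Finset.univ) :=
  stmt10_general n k c c₀ htight
end
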